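/- (Convergence of the Moreau–Yosida regularization) Let V be a real Banach space, T > 0, let the energy family E satisfy (E-a), (E-b), (E-c), and let the dissipation potentials Ψ satisfy (Ψ-a) and (Ψ-b). Then for all t ∈ [0,T), u ∈ D and w ∈ V*: lim_{r→0⁺} sup_{u_r ∈ J_{r,t}(w;u)} ‖u_r − u‖ = 0 and lim_{r→0⁺} Φ_{r,t}(w;u) = E_t(u) − ⟨w,u⟩. -/

import Mathlib

open MeasureTheory Filter Topology Set
open scoped Classical

noncomputable section

variable {V : Type*} [NormedAddCommGroup V] [NormedSpace ℝ V]

/-- The Legendre–Fenchel transform (convex conjugate) of a real-valued functional,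
with values in the extended reals. -/
def conjFn (Ψ : V → ℝ) (ξ : StrongDual ℝ V) : EReal :=
  ⨆ v : V, ((ξ v - Ψ v : ℝ) : EReal)

/-- The convex subdifferential of `Ψ` at `u`. -/
def cSubdiff (Ψ : V → ℝ) (u : V) : Set (StrongDual ℝ V) :=
  {ξ | ∀ v : V, Ψ u + ξ (v - u) ≤ Ψ v}

/-- The Fréchet subdifferential at `u ∈ D` of the functional equal to `E` on `D` and `+∞`
off `D`:  `ξ ∈ ∂E(u)` iff `liminf_{v→u} (E(v) - E(u) - ⟨ξ,v-u⟩)/‖v-u‖ ≥ 0`, written in the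
equivalent form: for all `ε > 0`, eventually near `u`, `E(v) ≥ E(u) + ⟨ξ,v-u⟩ - ε‖v-u‖`
for `v ∈ D` (for `v ∉ D` the functional is `+∞` and the inequality is automatic). -/
def frSubdiff (E : V → ℝ) (D : Set V) (u : V) : Set (StrongDual ℝ V) :=
  {ξ | u ∈ D ∧ ∀ ε > (0:ℝ), ∀ᶠ v in 𝓝 u, v ∈ D → E u + ξ (v - u) - ε * ‖v - u‖ ≤ E v}

/-- The extension of the energy functional by `+∞` off its effective domain `D`. -/
def Eext (E : V → ℝ) (D : Set V) (v : V) : EReal :=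
  if v ∈ D then ((E v : ℝ) : EReal) else ⊤

/-- `G(u) ≤ R` for `G(u) = sup_{t∈[0,T]} E_t(u)` (with `G(u) = +∞` off the domain `D`). -/
def GSublevel (T : ℝ) (E : ℝ → V → ℝ) (D : Set V) (u : V) (R : ℝ) : Prop :=
  u ∈ D ∧ ∀ t ∈ Icc (0:ℝ) T, E t u ≤ R

/-- The functional `Φ(r,t,u,w;·) : v ↦ r Ψ_u((v-u)/r) + E_{t+r}(v) - ⟨w,v⟩`
(with `E_{t+r} = +∞` off `D`). -/
def PhiFun (T : ℝ) (E : ℝ → V → ℝ) (D : Set V) (Ψ : V → V → ℝ)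
    (r t : ℝ) (u : V) (w : StrongDual ℝ V) (v : V) : EReal :=
  ((r * Ψ u (r⁻¹ • (v - u)) - w v : ℝ) : EReal) + Eext (E (t + r)) D v

/-- The Moreau–Yosida regularization `Φ_{r,t}(w;u) = inf_v Φ(r,t,u,w;v)`. -/
def PhiInf (T : ℝ) (E : ℝ → V → ℝ) (D : Set V) (Ψ : V → V → ℝ)
    (r t : ℝ) (u : V) (w : StrongDual ℝ V) : EReal :=
  ⨅ v : V, PhiFun T E D Ψ r t u w v

/-- The resolvent set `J_{r,t}(w;u)` of global minimizers of `Φ(r,t,u,w;·)`. -/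
def resolventJ (T : ℝ) (E : ℝ → V → ℝ) (D : Set V) (Ψ : V → V → ℝ)
    (r t : ℝ) (u : V) (w : StrongDual ℝ V) : Set V :=
  {v : V | PhiFun T E D Ψ r t u w v = PhiInf T E D Ψ r t u w}

/-- **(2.Ea) Constant domain:** each `E_t` is proper and lower semicontinuous with
time-independent effective domain `D`. -/
def AssumpEa (T : ℝ) (E : ℝ → V → ℝ) (D : Set V) : Prop :=
  D.Nonempty ∧ ∀ t ∈ Icc (0:ℝ) T, LowerSemicontinuous (Eext (E t) D)

/-- **(2.Eb) Compactness of sublevels:** for some `t* ∈ [0,T]`, `E_{t*}` has compact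
sublevel sets. -/
def AssumpEb (T : ℝ) (E : ℝ → V → ℝ) (D : Set V) : Prop :=
  ∃ ts ∈ Icc (0:ℝ) T, ∀ R : ℝ, IsCompact {u : V | u ∈ D ∧ E ts u ≤ R}

/-- **(2.Ec) Energetic control of power:** for `u ∈ D`, `t ↦ E_t(u)` is continuous on
`[0,T]`, differentiable on `(0,T)` with derivative `∂ₜE_t(u) = Edot t u` and
`|∂ₜ E_t(u)| ≤ C E_t(u)`. -/
def AssumpEc (T : ℝ) (E : ℝ → V → ℝ) (D : Set V) (Edot : ℝ → V → ℝ) (C : ℝ) : Prop :=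
  0 < C ∧ ∀ u ∈ D, ContinuousOn (fun t => E t u) (Icc (0:ℝ) T) ∧
    (∀ t ∈ Ioo (0:ℝ) T, HasDerivAt (fun s => E s u) (Edot t u) t) ∧
    (∀ t ∈ Ioo (0:ℝ) T, |Edot t u| ≤ C * E t u)

/-- **(2.Ed) Chain rule:** along any absolutely continuous curve `u` with integrable
subdifferential selection `ξ`, bounded energy and finite dissipation integrals, the map
`t ↦ E_t(u(t))` is absolutely continuous with `(d/dt) E_t(u(t)) ≥ ⟨ξ(t),u'(t)⟩ + ∂ₜE_t(u(t))`
almost everywhere. -/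
def AssumpEd (T : ℝ) (E : ℝ → V → ℝ) (D : Set V) (Edot : ℝ → V → ℝ)
    (Ψ : V → V → ℝ) : Prop :=
  ∀ (u u' : ℝ → V) (ξ : ℝ → StrongDual ℝ V),
    IntegrableOn u' (Ioc 0 T) →
    (∀ t ∈ Icc (0:ℝ) T, u t = u 0 + ∫ r in (0:ℝ)..t, u' r) →
    IntegrableOn ξ (Ioc 0 T) →
    (∃ M : ℝ, ∀ t ∈ Icc (0:ℝ) T, u t ∈ D ∧ |E t (u t)| ≤ M) →
    (∀ᵐ t ∂(volume.restrict (Ioc 0 T)), ξ t ∈ frSubdiff (E t) D (u t)) →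
    IntegrableOn (fun t => Ψ (u t) (u' t)) (Ioc 0 T) →
    (∃ P : ℝ → ℝ, IntegrableOn P (Ioc 0 T) ∧
      ∀ᵐ t ∂(volume.restrict (Ioc 0 T)), conjFn (Ψ (u t)) (ξ t) = ((P t : ℝ) : EReal)) →
    ∃ e' : ℝ → ℝ, IntegrableOn e' (Ioc 0 T) ∧
      (∀ t ∈ Icc (0:ℝ) T, E t (u t) = E 0 (u 0) + ∫ r in (0:ℝ)..t, e' r) ∧
      ∀ᵐ t ∂(volume.restrict (Ioc 0 T)), ξ t (u' t) + Edot t (u t) ≤ e' t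

/-- **(2.Ee) Strong-weak closedness** of the graph of `∂E_t` together with convergence of
energy and power. -/
def AssumpEe (T : ℝ) (E : ℝ → V → ℝ) (D : Set V) (Edot : ℝ → V → ℝ) : Prop :=
  ∀ t ∈ Icc (0:ℝ) T, ∀ (un : ℕ → V) (ξn : ℕ → StrongDual ℝ V) (u : V)
    (ξ : StrongDual ℝ V) (𝓔 P : ℝ),
    (∀ n, ξn n ∈ frSubdiff (E t) D (un n)) →
    Tendsto un atTop (𝓝 u) →
    (∀ v : V, Tendsto (fun n => ξn n v) atTop (𝓝 (ξ v))) →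
    Tendsto (fun n => E t (un n)) atTop (𝓝 𝓔) →
    Tendsto (fun n => Edot t (un n)) atTop (𝓝 P) →
    ξ ∈ frSubdiff (E t) D u ∧ E t u = 𝓔 ∧ P ≤ Edot t u

/-- **(2.Ψa) Dissipation potential:** each `Ψ_u : V → [0,∞)` is lower semicontinuous and
convex with `Ψ_u(0) = 0`, and any two elements of `∂Ψ_u(v)` have the same conjugate value. -/
def AssumpPsiA (Ψ : V → V → ℝ) : Prop :=
  ∀ u : V, LowerSemicontinuous (Ψ u) ∧ ConvexOn ℝ univ (Ψ u) ∧ Ψ u 0 = 0 ∧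
    (∀ v : V, 0 ≤ Ψ u v) ∧
    ∀ (v : V) (w₁ w₂ : StrongDual ℝ V),
      w₁ ∈ cSubdiff (Ψ u) v → w₂ ∈ cSubdiff (Ψ u) v →
      conjFn (Ψ u) w₁ = conjFn (Ψ u) w₂

/-- **(2.Ψb) Superlinearity:** `Ψ_u` and `Ψ*_u` are superlinear, uniformly with respect to
`u` in sublevels of `G`. -/
def AssumpPsiB (T : ℝ) (E : ℝ → V → ℝ) (D : Set V) (Ψ : V → V → ℝ) : Prop :=
  ∀ R > (0:ℝ),
    (∀ Kc : ℝ, ∃ ρ : ℝ, ∀ v : V, ρ ≤ ‖v‖ →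
      ∀ u : V, GSublevel T E D u R → Kc * ‖v‖ ≤ Ψ u v) ∧
    (∀ Kc : ℝ, ∃ ρ : ℝ, ∀ ξ : StrongDual ℝ V, ρ ≤ ‖ξ‖ →
      ∀ u : V, GSublevel T E D u R → ((Kc * ‖ξ‖ : ℝ) : EReal) ≤ conjFn (Ψ u) ξ)

/-- **(2.Ψc) Mosco continuity of the state dependence:** `uₙ → u` strongly with uniformly
bounded energy implies `Ψ_{uₙ}` Mosco-converges to `Ψ_u` (strong and weak liminf estimates
and strong and weak recovery sequences). -/
def AssumpPsiC (T : ℝ) (E : ℝ → V → ℝ) (D : Set V) (Ψ : V → V → ℝ) : Prop :=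
  ∀ (R : ℝ) (un : ℕ → V) (u : V), Tendsto un atTop (𝓝 u) →
    (∀ n, GSublevel T E D (un n) R) →
    ((∀ (v : V) (vn : ℕ → V), Tendsto vn atTop (𝓝 v) →
        ((Ψ u v : ℝ) : EReal) ≤
          Filter.liminf (fun n => ((Ψ (un n) (vn n) : ℝ) : EReal)) atTop)
     ∧ (∀ v : V, ∃ vn : ℕ → V, Tendsto vn atTop (𝓝 v) ∧
          Tendsto (fun n => Ψ (un n) (vn n)) atTop (𝓝 (Ψ u v)))
     ∧ (∀ (v : V) (vn : ℕ → V),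
          (∀ ζ : StrongDual ℝ V, Tendsto (fun n => ζ (vn n)) atTop (𝓝 (ζ v))) →
          ((Ψ u v : ℝ) : EReal) ≤
            Filter.liminf (fun n => ((Ψ (un n) (vn n) : ℝ) : EReal)) atTop)
     ∧ (∀ v : V, ∃ vn : ℕ → V,
          (∀ ζ : StrongDual ℝ V, Tendsto (fun n => ζ (vn n)) atTop (𝓝 (ζ v))) ∧
          Tendsto (fun n => Ψ (un n) (vn n)) atTop (𝓝 (Ψ u v))))

/-- **(2.Ba) Continuity of the perturbation** on sublevels of `G`. -/
def AssumpBa (T : ℝ) (E : ℝ → V → ℝ) (D : Set V)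
    (B : ℝ → V → StrongDual ℝ V) : Prop :=
  ∀ (tn : ℕ → ℝ) (un : ℕ → V) (t : ℝ) (u : V) (R : ℝ),
    (∀ n, tn n ∈ Icc (0:ℝ) T) → t ∈ Icc (0:ℝ) T →
    Tendsto tn atTop (𝓝 t) → Tendsto un atTop (𝓝 u) →
    (∀ n, GSublevel T E D (un n) R) →
    Tendsto (fun n => B (tn n) (un n)) atTop (𝓝 (B t u))

/-- **(2.Bb) Control of `B` by the energy:** there are `β > 0` and `c ∈ (0,1)` with
`c Ψ*_u(B(t,u)/c) ≤ β(1 + E_t(u))`. -/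
def AssumpBb (T : ℝ) (E : ℝ → V → ℝ) (D : Set V) (Ψ : V → V → ℝ)
    (B : ℝ → V → StrongDual ℝ V) : Prop :=
  ∃ β > (0:ℝ), ∃ c : ℝ, 0 < c ∧ c < 1 ∧
    ∀ u ∈ D, ∀ t ∈ Icc (0:ℝ) T,
      (c : EReal) * conjFn (Ψ u) (c⁻¹ • B t u) ≤ ((β * (1 + E t u) : ℝ) : EReal)

/-!
For `v` away from `u` the dissipation term `r Ψ_u((v-u)/r)` blows up as `r → 0⁺`, by the uniform
superlinearity of `Ψ_u`, while `E_{t+r} ≥ 0` (a consequence of `|∂ₜE| ≤ C E`); hence every `v`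
with `Φ(r,t,u,w;v) ≤ M` lies in a prescribed neighbourhood of `u` once `r` is small. Minimizers
satisfy this with `M` any bound for `Φ(r,t,u,w;u) = E_{t+r}(u) - ⟨w,u⟩`, and the same test point
gives `Φ_{r,t}(w;u) ≤ E_{t+r}(u) - ⟨w,u⟩ → E_t(u) - ⟨w,u⟩`. Near `u`, the Gronwall bound
`E_{t+r}(v) ≥ e^{-Cr} E_t(v)` and the lower semicontinuity of `E_t` make `E_{t+r}(v) - ⟨w,v⟩`
almost at least `E_t(u) - ⟨w,u⟩`, which gives the matching lower bound.
-/

namespace AssumpEc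

variable {X : Type*} {T C : ℝ} {E Edot : ℝ → X → ℝ} {D : Set X} {v : X}

theorem nonneg (hT : 0 < T) (hEc : AssumpEc T E D Edot C) (hv : v ∈ D) {s : ℝ}
    (hs : s ∈ Icc 0 T) : 0 ≤ E s v := by
  obtain ⟨hC, h⟩ := hEc
  obtain ⟨hcont, -, hbound⟩ := h v hv
  have hIoo : ∀ r ∈ Ioo 0 T, 0 ≤ E r v := fun r hr =>
    nonneg_of_mul_nonneg_right ((abs_nonneg _).trans (hbound r hr)) hC
  have : (𝓝[Ioo 0 T] s).NeBot := mem_closure_iff_nhdsWithin_neBot.mp <| by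
    rwa [closure_Ioo hT.ne]
  exact ge_of_tendsto ((hcont s hs).mono Ioo_subset_Icc_self)
    (eventually_mem_nhdsWithin.mono hIoo)

theorem monotoneOn_exp_mul (hEc : AssumpEc T E D Edot C) (hv : v ∈ D) :
    MonotoneOn (fun s => Real.exp (C * s) * E s v) (Icc 0 T) := by
  obtain ⟨hcont, hderiv, hbound⟩ := hEc.2 v hv
  refine monotoneOn_of_hasDerivWithinAt_nonneg (convex_Icc 0 T)
    ((Real.continuous_exp.comp (continuous_const_mul C)).continuousOn.mul hcont)
    (f' := fun s => Real.exp (C * s) * (C * E s v + Edot s v)) (fun s hs => ?_) fun s hs => ?_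
  · rw [interior_Icc] at hs
    have hexp : HasDerivAt (fun s => Real.exp (C * s)) (Real.exp (C * s) * C) s := by
      simpa using ((hasDerivAt_id s).const_mul C).exp
    exact ((hexp.mul (hderiv s hs)).congr_deriv (by ring)).hasDerivWithinAt
  · rw [interior_Icc] at hs
    have := (neg_abs_le (Edot s v)).trans' (neg_le_neg (hbound s hs))
    exact mul_nonneg (Real.exp_pos _).le (by linarith)

theorem exp_neg_mul_le (hEc : AssumpEc T E D Edot C) (hv : v ∈ D) {s r : ℝ}
    (hs : s ∈ Icc 0 T) (hr : 0 ≤ r) (hsr : s + r ≤ T) :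
    Real.exp (-(C * r)) * E s v ≤ E (s + r) v := by
  have h : Real.exp (C * s) * E s v ≤ Real.exp (C * (s + r)) * E (s + r) v :=
    hEc.monotoneOn_exp_mul hv hs ⟨by linarith [hs.1], hsr⟩ (by linarith)
  have hsplit : Real.exp (C * (s + r)) = Real.exp (C * s) * Real.exp (C * r) := by
    rw [← Real.exp_add]; ring_nf
  rw [hsplit, mul_assoc, mul_le_mul_iff_of_pos_left (Real.exp_pos _)] at h
  rwa [Real.exp_neg, inv_mul_le_iff₀ (Real.exp_pos _)]

theorem exists_gSublevel (hEc : AssumpEc T E D Edot C) {u : X} (hu : u ∈ D) :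
    ∃ R > 0, GSublevel T E D u R := by
  obtain ⟨M, hM⟩ := isCompact_Icc.exists_bound_of_continuousOn (hEc.2 u hu).1
  exact ⟨max M 1, by positivity, hu, fun s hs =>
    (le_abs_self _).trans <| (hM s hs).trans (le_max_left _ _)⟩

theorem tendsto_add (hEc : AssumpEc T E D Edot C) {t : ℝ} (ht : t ∈ Icc 0 T) {u : X}
    (hu : u ∈ D) : Tendsto (fun r => E (t + r) u) (𝓝[Ioo 0 (T - t)] 0) (𝓝 (E t u)) := by
  refine ((hEc.2 u hu).1 t ht).tendsto.comp (tendsto_nhdsWithin_iff.2 ⟨?_, ?_⟩)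
  · have : Tendsto (fun r => t + r) (𝓝 0) (𝓝 t) := by
      simpa using (continuous_const_add t).tendsto 0
    exact this.mono_left nhdsWithin_le_nhds
  · filter_upwards [self_mem_nhdsWithin] with r hr
    exact ⟨by linarith [ht.1, hr.1], by linarith [hr.2]⟩

theorem eventually_lt_add [NormedAddCommGroup X] (hT : 0 < T) (hEa : AssumpEa T E D)
    (hEc : AssumpEc T E D Edot C) {t : ℝ} (ht : t ∈ Icc 0 T) {u : X} (hu : u ∈ D) {b : ℝ}
    (hb : b < E t u) :
    ∀ᶠ p in 𝓝[≥] 0 ×ˢ 𝓝 u, t + p.1 ≤ T → p.2 ∈ D → b < E (t + p.1) p.2 := by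
  obtain ⟨b', hbb', hb'⟩ := exists_between hb
  have hspace : ∀ᶠ v in 𝓝 u, (b' : EReal) < Eext (E t) D v :=
    hEa.2 t ht u b' (by simpa [Eext, hu] using hb')
  have hdecay : Tendsto (fun r => Real.exp (-(C * r)) * max b' 0) (𝓝 0) (𝓝 (max b' 0)) := by
    have : Continuous fun r : ℝ => Real.exp (-(C * r)) * max b' 0 := by fun_prop
    simpa using this.tendsto 0
  have htime : ∀ᶠ r in 𝓝[≥] 0, 0 ≤ r ∧ b < Real.exp (-(C * r)) * max b' 0 :=
    eventually_mem_nhdsWithin.and (nhdsWithin_le_nhds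
      (hdecay.eventually (lt_mem_nhds (hbb'.trans_le (le_max_left _ _)))))
  filter_upwards [htime.prod_mk hspace] with ⟨r, v⟩ ⟨⟨hr, hbr⟩, hbv⟩ hrT hv
  have hEtv : max b' 0 ≤ E t v :=
    max_le (by simpa [Eext, hv] using hbv.le) (hEc.nonneg hT hv ht)
  calc b < Real.exp (-(C * r)) * max b' 0 := hbr
    _ ≤ Real.exp (-(C * r)) * E t v := by gcongr
    _ ≤ E (t + r) v := hEc.exp_neg_mul_le hv ht hr hrT

end AssumpEc

theorem AssumpPsiB.exists_affine_minorant {T : ℝ} {E : ℝ → V → ℝ} {D : Set V}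
    {Ψ : V → V → ℝ} (hPa : AssumpPsiA Ψ) (hPb : AssumpPsiB T E D Ψ) {R : ℝ} (hR : 0 < R)
    {u : V} (hu : GSublevel T E D u R) (K : ℝ) : ∃ c, ∀ z, K * ‖z‖ - c ≤ Ψ u z := by
  obtain ⟨ρ, hρ⟩ := (hPb R hR).1 K
  refine ⟨|K| * |ρ|, fun z => ?_⟩
  rcases le_or_gt ρ ‖z‖ with hz | hz
  · linarith [hρ z hz u hu, mul_nonneg (abs_nonneg K) (abs_nonneg ρ)]
  · have : K * ‖z‖ ≤ |K| * |ρ| := (le_abs_self _).trans <| by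
      rw [abs_mul, abs_norm]; gcongr; exact hz.le.trans (le_abs_self ρ)
    linarith [(hPa u).2.2.2.1 z]

theorem apply_le_apply_add_norm_mul (w : StrongDual ℝ V) (u v : V) :
    w v ≤ w u + ‖w‖ * ‖v - u‖ := by
  have : w (v - u) ≤ ‖w‖ * ‖v - u‖ := (le_abs_self _).trans (w.le_opNorm (v - u))
  rw [map_sub] at this
  linarith

section MoreauYosida

variable {T : ℝ} {E : ℝ → V → ℝ} {D : Set V} {Ψ : V → V → ℝ} {r t : ℝ} {u v : V}
  {w : StrongDual ℝ V}

theorem phiFun_of_mem (hv : v ∈ D) : PhiFun T E D Ψ r t u w v =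
    ((r * Ψ u (r⁻¹ • (v - u)) - w v + E (t + r) v : ℝ) : EReal) := by
  rw [PhiFun, Eext, if_pos hv, EReal.coe_add]

theorem phiFun_of_notMem (hv : v ∉ D) : PhiFun T E D Ψ r t u w v = ⊤ := by
  rw [PhiFun, Eext, if_neg hv, EReal.coe_add_top]

theorem mem_of_phiFun_le {M : ℝ} (h : PhiFun T E D Ψ r t u w v ≤ M) : v ∈ D := by
  by_contra hv
  rw [phiFun_of_notMem hv, top_le_iff] at h
  exact EReal.coe_ne_top M h

theorem phiInf_le (hΨ : Ψ u 0 = 0) (hu : u ∈ D) :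
    PhiInf T E D Ψ r t u w ≤ ((E (t + r) u - w u : ℝ) : EReal) := by
  refine (iInf_le _ u).trans_eq ?_
  rw [phiFun_of_mem hu, sub_self, smul_zero, hΨ]
  ring_nf

theorem eventually_phiFun_le_imp_mem (hΨ : ∀ K, ∃ c, ∀ z, K * ‖z‖ - c ≤ Ψ u z)
    (hE : ∀ s ∈ Icc t T, ∀ v ∈ D, 0 ≤ E s v) (M : ℝ) {s : Set V} (hs : s ∈ 𝓝 u) :
    ∀ᶠ r in 𝓝[>] 0, t + r ≤ T → ∀ v, PhiFun T E D Ψ r t u w v ≤ M → v ∈ s := by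
  obtain ⟨ε, hε, hball⟩ := Metric.mem_nhds_iff.mp hs
  set L := |M + w u| + 1
  obtain ⟨c, hc⟩ := hΨ (‖w‖ + L / ε)
  have hrc : ∀ᶠ r in 𝓝 (0 : ℝ), r * c < 1 :=
    (continuous_mul_const c).tendsto' 0 0 (zero_mul c) |>.eventually (gt_mem_nhds one_pos)
  filter_upwards [nhdsWithin_le_nhds hrc, self_mem_nhdsWithin] with r hrc (hr : 0 < r) hrT v hv
  have hvD := mem_of_phiFun_le hv
  rw [phiFun_of_mem hvD, EReal.coe_le_coe_iff] at hv
  have hscale : (‖w‖ + L / ε) * ‖v - u‖ - r * c ≤ r * Ψ u (r⁻¹ • (v - u)) := by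
    have := mul_le_mul_of_nonneg_left (hc (r⁻¹ • (v - u))) hr.le
    rw [norm_smul, norm_inv, Real.norm_eq_abs, abs_of_pos hr] at this
    calc _ = r * ((‖w‖ + L / ε) * (r⁻¹ * ‖v - u‖) - c) := by field_simp
      _ ≤ _ := this
  have hEv := hE (t + r) ⟨by linarith, hrT⟩ v hvD
  have hwv := apply_le_apply_add_norm_mul w u v
  have hbound : L / ε * ‖v - u‖ < L := by linarith [le_abs_self (M + w u)]
  refine hball (mem_ball_iff_norm.mpr (lt_of_not_ge fun hεv => hbound.not_ge ?_))
  rw [div_mul_eq_mul_div, le_div_iff₀ hε]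
  gcongr

theorem eventually_le_phiInf (hΨ0 : ∀ z, 0 ≤ Ψ u z) (hΨ : ∀ K, ∃ c, ∀ z, K * ‖z‖ - c ≤ Ψ u z)
    (hE : ∀ s ∈ Icc t T, ∀ v ∈ D, 0 ≤ E s v)
    (hlsc : ∀ b < E t u, ∀ᶠ p in 𝓝[≥] 0 ×ˢ 𝓝 u, t + p.1 ≤ T → p.2 ∈ D → b < E (t + p.1) p.2)
    {a : ℝ} (ha : a < E t u - w u) :
    ∀ᶠ r in 𝓝[>] 0, t + r ≤ T → (a : EReal) ≤ PhiInf T E D Ψ r t u w := by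
  set c := E t u - w u - a
  obtain ⟨P, hP, S, hS, hPS⟩ := eventually_prod_iff.mp (hlsc (E t u - c / 2) (by linarith))
  have hw : ∀ᶠ v in 𝓝 u, w v < w u + c / 2 :=
    (w.continuous.tendsto u).eventually (gt_mem_nhds (by linarith))
  filter_upwards [eventually_phiFun_le_imp_mem hΨ hE (E t u - w u) (hS.and hw),
    nhdsWithin_mono _ Ioi_subset_Ici_self hP, self_mem_nhdsWithin]
    with r hloc hPr (hr : 0 < r) hrT
  refine le_iInf fun v => ?_
  rcases le_or_gt (PhiFun T E D Ψ r t u w v) (E t u - w u : ℝ) with hv | hv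
  · obtain ⟨hSv, hwv⟩ := hloc hrT v hv
    have hvD := mem_of_phiFun_le hv
    rw [phiFun_of_mem hvD, EReal.coe_le_coe_iff]
    linarith [hPS hPr hSv hrT hvD, mul_nonneg hr.le (hΨ0 (r⁻¹ • (v - u)))]
  · exact (EReal.coe_le_coe_iff.mpr (by linarith)).trans hv.le

end MoreauYosida

theorem moreau_yosida_convergence_general
    (T : ℝ) (hT : 0 < T)
    (E : ℝ → V → ℝ) (D : Set V) (Edot : ℝ → V → ℝ) (C : ℝ) (Ψ : V → V → ℝ)
    (hEa : AssumpEa T E D) (hEc : AssumpEc T E D Edot C)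
    (hPa : AssumpPsiA Ψ) (hPb : AssumpPsiB T E D Ψ)
    (t : ℝ) (ht : t ∈ Ico (0:ℝ) T) (u : V) (hu : u ∈ D) (w : StrongDual ℝ V) :
    (∀ ε > (0:ℝ), ∃ δ > (0:ℝ), ∀ r : ℝ, 0 < r → r < δ → r ≤ T - t →
      ∀ ur ∈ resolventJ T E D Ψ r t u w, ‖ur - u‖ < ε)
    ∧ Tendsto (fun r => PhiInf T E D Ψ r t u w) (𝓝[Ioo (0:ℝ) (T - t)] 0)
        (𝓝 (((E t u - w u : ℝ) : EReal))) := by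
  have ht' : t ∈ Icc 0 T := Ico_subset_Icc_self ht
  obtain ⟨R, hR, huR⟩ := hEc.exists_gSublevel hu
  have hΨ := hPb.exists_affine_minorant hPa hR huR
  have hE : ∀ s ∈ Icc t T, ∀ v ∈ D, 0 ≤ E s v := fun s hs v hv =>
    hEc.nonneg hT hv ⟨ht.1.trans hs.1, hs.2⟩
  have hupper : ∀ r, PhiInf T E D Ψ r t u w ≤ ((E (t + r) u - w u : ℝ) : EReal) :=
    fun r => phiInf_le (hPa u).2.2.1 hu
  refine ⟨fun ε hε => ?_, tendsto_order.2 ⟨fun a ha => ?_, fun b hb => ?_⟩⟩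
  · obtain ⟨δ, hδ, hloc⟩ := (nhdsGT_basis 0).eventually_iff.mp
      (eventually_phiFun_le_imp_mem (w := w) hΨ hE (R - w u) (Metric.ball_mem_nhds u hε))
    refine ⟨δ, hδ, fun r hr hrδ hrT ur hur => mem_ball_iff_norm.mp
      (hloc ⟨hr, hrδ⟩ (by linarith) ur ?_)⟩
    rw [hur]
    exact (hupper r).trans (EReal.coe_le_coe_iff.mpr
      (by linarith [huR.2 (t + r) ⟨by linarith [ht.1], by linarith⟩]))
  · obtain ⟨a', haa', ha'⟩ := EReal.lt_iff_exists_real_btwn.mp ha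
    filter_upwards [nhdsWithin_mono _ Ioo_subset_Ioi_self (eventually_le_phiInf
      (hPa u).2.2.2.1 hΨ hE (fun b hb => hEc.eventually_lt_add hT hEa ht' hu hb)
      (EReal.coe_lt_coe_iff.mp ha')), self_mem_nhdsWithin] with r hr hrT
    exact haa'.trans_le (hr (by linarith [hrT.2]))
  · filter_upwards [(EReal.tendsto_coe.mpr ((hEc.tendsto_add ht' hu).sub_const (w u))).eventually
      (gt_mem_nhds hb)] with r hr
    exact (hupper r).trans_lt hr

/-- **Convergence of the Moreau–Yosida regularization** (part of Lemma 2.4, (2.16)).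
For `t ∈ [0,T)`, `u ∈ D` and `w ∈ V*`:
`lim_{r→0⁺} sup_{u_r ∈ J_{r,t}(w;u)} ‖u_r - u‖ = 0` and
`lim_{r→0⁺} Φ_{r,t}(w;u) = E_t(u) - ⟨w,u⟩`. -/
theorem moreau_yosida_convergence
    (T : ℝ) (hT : 0 < T)
    (E : ℝ → V → ℝ) (D : Set V) (Edot : ℝ → V → ℝ) (C : ℝ) (Ψ : V → V → ℝ)
    (hEa : AssumpEa T E D) (hEb : AssumpEb T E D) (hEc : AssumpEc T E D Edot C)
    (hPa : AssumpPsiA Ψ) (hPb : AssumpPsiB T E D Ψ)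
    (t : ℝ) (ht : t ∈ Ico (0:ℝ) T) (u : V) (hu : u ∈ D) (w : StrongDual ℝ V) :
    (∀ ε > (0:ℝ), ∃ δ > (0:ℝ), ∀ r : ℝ, 0 < r → r < δ → r ≤ T - t →
      ∀ ur ∈ resolventJ T E D Ψ r t u w, ‖ur - u‖ < ε)
    ∧ Tendsto (fun r => PhiInf T E D Ψ r t u w) (𝓝[Ioo (0:ℝ) (T - t)] 0)
        (𝓝 (((E t u - w u : ℝ) : EReal))) :=
  moreau_yosida_convergence_general T hT E D Edot C Ψ hEa hEc hPa hPb t ht u hu w
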